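/- Let V = ℂ^{n|n}, s the super-permutation and ε as above on V ⊗ V, and set s_1 = s⊗Id, s_2 = Id⊗s, ε_1 = ε⊗Id, ε_2 = Id⊗ε on V^{⊗3}. Then s_1 ε_2 ε_1 = −s_2 ε_1 and ε_1 ε_2 s_1 = ε_1 s_2. -/
import Mathlib


/-! `V = ℂ^{n|n}` with basis indexed by `Idx n = Fin n ⊕ Fin n`
(`Sum.inl` = even indices, `Sum.inr` = odd); tensor powers of `V` are realized
as coordinate functions. -/

abbrev Idx (n : ℕ) := Fin n ⊕ Fin n

/-- The bar involution `i ↦ ī`. -/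
def bar {n : ℕ} : Idx n → Idx n := Sum.swap

/-- Parity: `false` (even) on `1,…,n`, `true` (odd) on `1̄,…,n̄`. -/
def pIdx {n : ℕ} : Idx n → Bool := Sum.elim (fun _ => false) (fun _ => true)

/-- The sign `(−1)^{|e_i|}`. -/
def sgn {n : ℕ} (i : Idx n) : ℂ := if pIdx i then -1 else 1

/-- The sign `(−1)^{|e_a||e_b|}`. -/
def sSign {n : ℕ} (a b : Idx n) : ℂ := if pIdx a && pIdx b then -1 else 1

/-- `V ⊗ V` in coordinates. -/
abbrev VV (n : ℕ) := Idx n × Idx n → ℂ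

/-- `ε(e_a ⊗ e_b) = δ_{a,b̄} ∑_{i∈I} (−1)^{|e_i|} e_i ⊗ e_{ī}`. -/
noncomputable def epsOp (n : ℕ) : VV n →ₗ[ℂ] VV n :=
  LinearMap.pi fun p =>
    (if p.2 = bar p.1 then sgn p.1 else 0) • ∑ a : Idx n, LinearMap.proj (a, bar a)

/-- The super-permutation `s(e_a ⊗ e_b) = (−1)^{|e_a||e_b|} e_b ⊗ e_a`. -/
noncomputable def sOp (n : ℕ) : VV n →ₗ[ℂ] VV n :=
  LinearMap.pi fun p => sSign p.1 p.2 • LinearMap.proj (p.2, p.1)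

/-- `V ⊗ V ⊗ V` in coordinates. -/
abbrev VVV (n : ℕ) := Idx n × Idx n × Idx n → ℂ

/-- `ε₁ = ε ⊗ Id` on `V^{⊗3}`. -/
noncomputable def eps1 (n : ℕ) : VVV n →ₗ[ℂ] VVV n :=
  LinearMap.pi fun p =>
    (if p.2.1 = bar p.1 then sgn p.1 else 0) • ∑ k : Idx n, LinearMap.proj (k, bar k, p.2.2)

/-- `ε₂ = Id ⊗ ε` on `V^{⊗3}`. -/
noncomputable def eps2 (n : ℕ) : VVV n →ₗ[ℂ] VVV n :=
  LinearMap.pi fun p =>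
    (if p.2.2 = bar p.2.1 then sgn p.2.1 else 0) • ∑ k : Idx n, LinearMap.proj (p.1, k, bar k)

/-- `s₁ = s ⊗ Id` on `V^{⊗3}`. -/
noncomputable def sOp1 (n : ℕ) : VVV n →ₗ[ℂ] VVV n :=
  LinearMap.pi fun p => sSign p.1 p.2.1 • LinearMap.proj (p.2.1, p.1, p.2.2)

/-- `s₂ = Id ⊗ s` on `V^{⊗3}`. -/
noncomputable def sOp2 (n : ℕ) : VVV n →ₗ[ℂ] VVV n :=
  LinearMap.pi fun p => sSign p.2.1 p.2.2 • LinearMap.proj (p.1, p.2.2, p.2.1)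

lemma bar_bar {n : ℕ} (i : Idx n) : bar (bar i) = i := Sum.swap_swap i

lemma key1 {n : ℕ} (c x : Idx n) : sgn (bar c) * sSign c x = -(sSign (bar x) c) := by
  rcases c with c | c <;> rcases x with x | x <;> simp [sgn, sSign, bar, pIdx]

lemma key2 {n : ℕ} (a b : Idx n) : sSign a b * sgn b = sSign b (bar a) := by
  rcases a with a | a <;> rcases b with b | b <;> simp [sgn, sSign, bar, pIdx]

/-- relation (P.6)(b) in the representation on `V^{⊗3}`:
`s₁ ε₂ ε₁ = −s₂ ε₁` and `ε₁ ε₂ s₁ = ε₁ s₂`.  The operators act on the right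
(the representation lands in `End(V^{⊗3})^{opp}`), so a word `x y z` acts as
the composition `z ∘ y ∘ x`. -/
theorem rel_P6b (n : ℕ) :
    (eps1 n) ∘ₗ (eps2 n) ∘ₗ (sOp1 n) = -((eps1 n) ∘ₗ (sOp2 n)) ∧
    (sOp1 n) ∘ₗ (eps2 n) ∘ₗ (eps1 n) = (sOp2 n) ∘ₗ (eps1 n) := by
  constructor <;> refine LinearMap.ext fun f => funext fun p => ?_ <;>
    simp only [LinearMap.comp_apply, LinearMap.neg_apply, eps1, eps2, sOp1, sOp2,
      LinearMap.pi_apply, LinearMap.smul_apply, LinearMap.proj_apply, LinearMap.sum_apply,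
      Pi.neg_apply, smul_eq_mul, Finset.mul_sum, bar_bar, Finset.sum_ite_eq, Finset.sum_ite_eq',
      Finset.mem_univ, if_true, mul_ite, mul_zero, ite_mul, zero_mul, Finset.sum_ite_irrel,
      Finset.sum_const_zero]
  · split
    · rw [← Finset.sum_neg_distrib]
      refine Finset.sum_congr rfl fun x _ => ?_
      linear_combination sgn p.1 * f (x, p.2.2, bar x) * key1 p.2.2 x
    · simp
  · split
    next h =>
      rw [h]
      refine Finset.sum_congr rfl fun i _ => ?_
      linear_combination sgn p.1 * f (i, bar i, p.2.1) * key2 p.1 p.2.1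
    next => rfl
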